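/- Let (k,δ) be a differential field, let A = (α,β)_{k,ω} be a symbol algebra of degree m with generators u, v, and let d_s be the standard derivation on A. Then for every derivation d on A extending δ there exists a unique element θ ∈ A whose coordinate at the basis element u^0 v^0 = 1 is zero (i.e. θ lies in the span of the u^i v^j with (i,j) ≠ (0,0)) such that d(x) = d_s(x) + x·θ − θ·x for all x ∈ A. -/

import Mathlib

lemma sa_pow_mul_pow_eq_one {A : Type*} [Monoid A] {x y : A}
    (h1 : x * y = 1) : y * x = 1 → ∀ n : ℕ, x ^ n * y ^ n = 1 := by
  intro _ n
  induction n with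
  | zero => simp
  | succ n ih =>
    rw [pow_succ, pow_succ', mul_assoc, ← mul_assoc x y, h1, one_mul, ih]



/-- Every derivation on a symbol algebra extending `δ` differs from the
standard derivation `dₛ` by a unique inner derivation `∂_θ` with `θ` of trace zero. -/
theorem symbolAlgebra_derivation_eq_standard_add_inner
    {k : Type*} [Field k] {m : ℕ} (hm : 2 ≤ m) (hchar : (m : k) ≠ 0)
    {ω : k} (hω : IsPrimitiveRoot ω m)
    {α β : k} (hα : α ≠ 0) (hβ : β ≠ 0)
    {A : Type*} [Ring A] [Algebra k A]
    (u v : A)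
    (hu : u ^ m = algebraMap k A α)
    (hv : v ^ m = algebraMap k A β)
    (hvu : v * u = ω • (u * v))
    (b : Module.Basis (Fin m × Fin m) k A)
    (hb : ∀ p : Fin m × Fin m, b p = u ^ (p.1 : ℕ) * v ^ (p.2 : ℕ))
    (δ : k → k)
    (hδa : ∀ x y : k, δ (x + y) = δ x + δ y)
    (hδm : ∀ x y : k, δ (x * y) = x * δ y + δ x * y)
    (ds : A → A)
    (hdsa : ∀ x y : A, ds (x + y) = ds x + ds y)
    (hdsm : ∀ x y : A, ds (x * y) = x * ds y + ds x * y)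
    (hdsk : ∀ c : k, ds (algebraMap k A c) = algebraMap k A (δ c))
    (hdsu : ds u = (δ α / ((m : k) * α)) • u)
    (hdsv : ds v = (δ β / ((m : k) * β)) • v)
    (d : A → A)
    (hda : ∀ x y : A, d (x + y) = d x + d y)
    (hdm : ∀ x y : A, d (x * y) = x * d y + d x * y)
    (hdk : ∀ c : k, d (algebraMap k A c) = algebraMap k A (δ c)) :
    ∃! θ : A,
      b.repr θ (⟨0, by omega⟩, ⟨0, by omega⟩) = 0 ∧
      ∀ x : A, d x = ds x + x * θ - θ * x := by
  haveI : NeZero m := ⟨by omega⟩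
  classical
  -- the difference map E = d - ds is a k-linear derivation vanishing on k
  set E : A → A := fun x => d x - ds x with hE
  have hem : ∀ x y : A, E (x * y) = x * E y + E x * y := by
    intro x y
    simp only [hE, hdm, hdsm]
    rw [mul_sub, sub_mul]; abel
  have hek : ∀ c : k, E (algebraMap k A c) = 0 := by
    intro c; simp [hE, hdk c, hdsk c]
  have hes : ∀ (c : k) (x : A), E (c • x) = c • E x := by
    intro c x
    rw [Algebra.smul_def, hem, hek, zero_mul, add_zero, ← Algebra.smul_def]
  -- algebraMap facts
  have halg : ∀ (c : k) (x : A), algebraMap k A c * x = c • x := fun c x =>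
    (Algebra.smul_def c x).symm
  have halg' : ∀ (c : k) (x : A), x * algebraMap k A c = c • x := by
    intro c x; rw [← Algebra.commutes, Algebra.smul_def]
  -- commutation lemmas
  have hcomm_u : ∀ n : ℕ, u ^ n * u = u * u ^ n := fun n => by
    rw [← pow_succ, pow_succ']
  have hcomm_v : ∀ n : ℕ, v ^ n * v = v * v ^ n := fun n => by
    rw [← pow_succ, pow_succ']
  have hcvu : ∀ i : ℕ, v * u ^ i = ω ^ i • (u ^ i * v) := by
    intro i
    induction i with
    | zero => simp
    | succ n ih =>
      rw [pow_succ, ← mul_assoc, ih, smul_mul_assoc, mul_assoc, hvu,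
        mul_smul_comm, smul_smul, ← pow_succ, ← mul_assoc]
  have hcvj : ∀ j : ℕ, v ^ j * u = ω ^ j • (u * v ^ j) := by
    intro j
    induction j with
    | zero => simp
    | succ n ih =>
      rw [pow_succ, mul_assoc, hvu, mul_smul_comm, ← mul_assoc, ih,
        smul_mul_assoc, smul_smul, ← pow_succ', mul_assoc]
  -- inverses of u and v
  set uinv : A := α⁻¹ • u ^ (m - 1) with huinv
  set vinv : A := β⁻¹ • v ^ (m - 1) with hvinv
  have hum : u * u ^ (m - 1) = u ^ m := by
    rw [← pow_succ']; congr 1; omega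
  have hum' : u ^ (m - 1) * u = u ^ m := by
    rw [← pow_succ]; congr 1; omega
  have hvm : v * v ^ (m - 1) = v ^ m := by
    rw [← pow_succ']; congr 1; omega
  have hvm' : v ^ (m - 1) * v = v ^ m := by
    rw [← pow_succ]; congr 1; omega
  have huu : u * uinv = 1 := by
    rw [huinv, mul_smul_comm, hum, hu, Algebra.algebraMap_eq_smul_one, smul_smul,
      inv_mul_cancel₀ hα, one_smul]
  have huu' : uinv * u = 1 := by
    rw [huinv, smul_mul_assoc, hum', hu, Algebra.algebraMap_eq_smul_one, smul_smul,
      inv_mul_cancel₀ hα, one_smul]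
  have hvv : v * vinv = 1 := by
    rw [hvinv, mul_smul_comm, hvm, hv, Algebra.algebraMap_eq_smul_one, smul_smul,
      inv_mul_cancel₀ hβ, one_smul]
  have hvv' : vinv * v = 1 := by
    rw [hvinv, smul_mul_assoc, hvm', hv, Algebra.algebraMap_eq_smul_one, smul_smul,
      inv_mul_cancel₀ hβ, one_smul]
  -- basis monomials and their inverses
  set W : Fin m × Fin m → A := fun p => u ^ (p.1 : ℕ) * v ^ (p.2 : ℕ) with hW
  set Winv : Fin m × Fin m → A := fun p => vinv ^ (p.2 : ℕ) * uinv ^ (p.1 : ℕ) with hWinv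
  have hbW : ∀ p, b p = W p := by
    intro p; rw [hb, hW]
  have hWW : ∀ p, W p * Winv p = 1 := by
    intro p
    simp only [hW, hWinv]
    calc u ^ (p.1 : ℕ) * v ^ (p.2 : ℕ) * (vinv ^ (p.2 : ℕ) * uinv ^ (p.1 : ℕ))
        = u ^ (p.1 : ℕ) * ((v ^ (p.2 : ℕ) * vinv ^ (p.2 : ℕ)) * uinv ^ (p.1 : ℕ)) := by
          simp only [mul_assoc]
      _ = 1 := by rw [sa_pow_mul_pow_eq_one hvv hvv', one_mul,
          sa_pow_mul_pow_eq_one huu huu']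
  have hWW' : ∀ p, Winv p * W p = 1 := by
    intro p
    simp only [hW, hWinv]
    calc vinv ^ (p.2 : ℕ) * uinv ^ (p.1 : ℕ) * (u ^ (p.1 : ℕ) * v ^ (p.2 : ℕ))
        = vinv ^ (p.2 : ℕ) * ((uinv ^ (p.1 : ℕ) * u ^ (p.1 : ℕ)) * v ^ (p.2 : ℕ)) := by
          simp only [mul_assoc]
      _ = 1 := by rw [sa_pow_mul_pow_eq_one huu' huu, one_mul,
          sa_pow_mul_pow_eq_one hvv' hvv]
  -- value of +1 on Fin m
  have hval : ∀ i : Fin m, ((i + 1 : Fin m) : ℕ) = if (i : ℕ) + 1 = m then 0 else (i : ℕ) + 1 := by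
    intro i
    have h1 : ((1 : Fin m) : ℕ) = 1 := by
      rw [Fin.val_one']; exact Nat.mod_eq_of_lt (by omega)
    rw [Fin.val_add, h1]
    split_ifs with h
    · rw [h, Nat.mod_self]
    · exact Nat.mod_eq_of_lt (by omega)
  -- shift equivalences
  set σ : (Fin m × Fin m) ≃ (Fin m × Fin m) :=
    (Equiv.addRight (1 : Fin m)).prodCongr (Equiv.refl (Fin m)) with hσ
  set τ : (Fin m × Fin m) ≃ (Fin m × Fin m) :=
    (Equiv.refl (Fin m)).prodCongr (Equiv.addRight (1 : Fin m)) with hτ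
  have hσ1 : ∀ p : Fin m × Fin m, (σ p).1 = p.1 + 1 := by
    intro p; simp [hσ]
  have hσ2 : ∀ p : Fin m × Fin m, (σ p).2 = p.2 := by
    intro p; simp [hσ]
  have hτ1 : ∀ p : Fin m × Fin m, (τ p).1 = p.1 := by
    intro p; simp [hτ]
  have hτ2 : ∀ p : Fin m × Fin m, (τ p).2 = p.2 + 1 := by
    intro p; simp [hτ]
  -- eigenvalue scalars
  set lamu : Fin m × Fin m → k := fun p => if ((p.1 : ℕ) + 1 = m) then α else 1 with hlamu
  set nuv : Fin m × Fin m → k := fun p => if ((p.2 : ℕ) + 1 = m) then β else 1 with hnuv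
  have hlamu0 : ∀ p, lamu p ≠ 0 := by
    intro p; simp only [hlamu]; split_ifs <;> simp [hα]
  have hnuv0 : ∀ p, nuv p ≠ 0 := by
    intro p; simp only [hnuv]; split_ifs <;> simp [hβ]
  -- the four structure lemmas
  have hA1u : ∀ p, u * W p = lamu p • W (σ p) := by
    intro p
    simp only [hW, hlamu, hσ1, hσ2, hval]
    by_cases h : (p.1 : ℕ) + 1 = m
    · simp only [if_pos h]
      rw [pow_zero, one_mul, ← mul_assoc, ← pow_succ', h, hu, halg]
    · simp only [if_neg h, one_smul]
      rw [← mul_assoc, ← pow_succ']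
  have hR1u : ∀ p, W p * u = (ω ^ (p.2 : ℕ) * lamu p) • W (σ p) := by
    intro p
    have h1 : W p * u = ω ^ (p.2 : ℕ) • (u * W p) := by
      simp only [hW]
      rw [mul_assoc, hcvj, mul_smul_comm, ← mul_assoc, hcomm_u, mul_assoc]
    rw [h1, hA1u p, smul_smul]
  have hA1v : ∀ p, v * W p = (ω ^ (p.1 : ℕ) * nuv p) • W (τ p) := by
    intro p
    simp only [hW, hnuv, hτ1, hτ2, hval]
    by_cases h : (p.2 : ℕ) + 1 = m
    · simp only [if_pos h]
      rw [pow_zero, mul_one, ← mul_assoc, hcvu, smul_mul_assoc, mul_assoc,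
        ← pow_succ', h, hv, halg', smul_smul]
    · simp only [if_neg h, mul_one]
      rw [← mul_assoc, hcvu, smul_mul_assoc, mul_assoc, ← pow_succ']
  have hR1v : ∀ p, W p * v = nuv p • W (τ p) := by
    intro p
    simp only [hW, hnuv, hτ1, hτ2, hval]
    by_cases h : (p.2 : ℕ) + 1 = m
    · simp only [if_pos h]
      rw [mul_assoc, ← pow_succ, h, hv, halg', pow_zero, mul_one]
    · simp only [if_neg h, one_smul]
      rw [mul_assoc, ← pow_succ]
  -- the candidate element
  have hmsq : ((m : k) ^ 2) ≠ 0 := pow_ne_zero 2 hchar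
  set S : A := ∑ p, W p * E (Winv p) with hS
  -- key computation: commutator with the averaged element recovers E on "eigen" elements
  have key : ∀ (a : A) (s : (Fin m × Fin m) ≃ (Fin m × Fin m)) (lam : Fin m × Fin m → k),
      (∀ p, a * W p = lam p • W (s p)) →
      a * (((m : k) ^ 2)⁻¹ • S) - (((m : k) ^ 2)⁻¹ • S) * a = E a := by
    intro a s lam ha1
    have ha2 : ∀ p, Winv (s p) * a = lam p • Winv p := by
      intro p
      calc Winv (s p) * a = Winv (s p) * a * (W p * Winv p) := by rw [hWW p, mul_one]
        _ = Winv (s p) * (a * W p) * Winv p := by simp only [mul_assoc]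
        _ = Winv (s p) * (lam p • W (s p)) * Winv p := by rw [ha1 p]
        _ = lam p • ((Winv (s p) * W (s p)) * Winv p) := by
            rw [mul_smul_comm, smul_mul_assoc]
        _ = lam p • Winv p := by rw [hWW' (s p), one_mul]
    have hsum1 : (∑ p, (a * W p) * E (Winv p)) = ∑ p, W p * E (Winv p * a) := by
      have step : ∀ p, (a * W p) * E (Winv p) = W (s p) * E (Winv (s p) * a) := by
        intro p
        rw [ha1 p, ha2 p, hes, smul_mul_assoc, mul_smul_comm]
      calc (∑ p, (a * W p) * E (Winv p)) = ∑ p, W (s p) * E (Winv (s p) * a) :=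
            Finset.sum_congr rfl (fun p _ => step p)
        _ = ∑ q, W q * E (Winv q * a) := Equiv.sum_comp s (fun q => W q * E (Winv q * a))
    have h1 : a * (((m : k) ^ 2)⁻¹ • S) = ((m : k) ^ 2)⁻¹ • ∑ p, (a * W p) * E (Winv p) := by
      rw [mul_smul_comm, hS, Finset.mul_sum]
      congr 1
      exact Finset.sum_congr rfl fun p _ => (mul_assoc _ _ _).symm
    have h2 : (((m : k) ^ 2)⁻¹ • S) * a = ((m : k) ^ 2)⁻¹ • ∑ p, W p * (E (Winv p) * a) := by
      rw [smul_mul_assoc, hS, Finset.sum_mul]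
      congr 1
      exact Finset.sum_congr rfl fun p _ => mul_assoc _ _ _
    rw [h1, h2, hsum1, ← smul_sub, ← Finset.sum_sub_distrib]
    have h3 : ∀ p ∈ (Finset.univ : Finset (Fin m × Fin m)),
        W p * E (Winv p * a) - W p * (E (Winv p) * a) = E a := by
      intro p _
      rw [hem, mul_add, ← mul_assoc, hWW p, one_mul]
      abel
    rw [Finset.sum_congr rfl h3, Finset.sum_const, Finset.card_univ, Fintype.card_prod,
      Fintype.card_fin]
    have hc : ((m * m : ℕ) : k) = (m : k) ^ 2 := by push_cast; ring
    rw [← Nat.cast_smul_eq_nsmul k, hc, inv_smul_smul₀ hmsq]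
  obtain ⟨θ₀, hEu, hEv⟩ : ∃ t : A, (u * t - t * u = E u) ∧ (v * t - t * v = E v) :=
    ⟨_, key u σ lamu hA1u, key v τ (fun p => ω ^ (p.1 : ℕ) * nuv p) hA1v⟩
  -- normalize the trace coordinate
  set z0 : Fin m × Fin m := (⟨0, by omega⟩, ⟨0, by omega⟩) with hz0
  set θ : A := θ₀ - (b.repr θ₀ z0) • 1 with hθdef
  have hone : b z0 = 1 := by
    rw [hb]; simp [hz0]
  have hrepr : b.repr θ z0 = 0 := by
    have h1 : b.repr (1 : A) = Finsupp.single z0 1 := by rw [← hone]; exact b.repr_self z0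
    rw [hθdef, map_sub, map_smul, h1]
    simp
  have hcommθ : ∀ x : A, x * θ - θ * x = x * θ₀ - θ₀ * x := by
    intro x
    rw [hθdef, mul_sub, sub_mul, mul_smul_comm, smul_mul_assoc, mul_one, one_mul]
    abel
  -- the derivation property holds for all x
  let g : A →ₗ[k] A :=
    { toFun := fun x => E x - (x * θ - θ * x)
      map_add' := by
        intro x y
        simp only [hE]
        rw [hda, hdsa, add_mul, mul_add]
        abel
      map_smul' := by
        intro c x
        simp only [RingHom.id_apply]
        rw [hes, smul_mul_assoc, mul_smul_comm, ← smul_sub, ← smul_sub] }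
  have hgdef : ∀ x : A, g x = E x - (x * θ - θ * x) := fun x => rfl
  have hg : ∀ x y : A, g (x * y) = x * g y + g x * y := by
    intro x y
    rw [hgdef, hgdef, hgdef, hem]
    simp only [mul_sub, sub_mul, ← mul_assoc]
    abel
  have hgk : ∀ c : k, g (algebraMap k A c) = 0 := by
    intro c
    rw [hgdef, hek, halg, halg']
    simp
  have hg1 : g 1 = 0 := by
    have := hgk 1; rwa [map_one] at this
  have hgu : g u = 0 := by
    rw [hgdef, hcommθ, hEu, sub_self]
  have hgv : g v = 0 := by
    rw [hgdef, hcommθ, hEv, sub_self]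
  have hgup : ∀ n : ℕ, g (u ^ n) = 0 := by
    intro n
    induction n with
    | zero => simpa using hg1
    | succ n ih => rw [pow_succ, hg, hgu, ih, mul_zero, zero_mul, add_zero]
  have hgvp : ∀ n : ℕ, g (v ^ n) = 0 := by
    intro n
    induction n with
    | zero => simpa using hg1
    | succ n ih => rw [pow_succ, hg, hgv, ih, mul_zero, zero_mul, add_zero]
  have hgzero : ∀ x : A, g x = 0 := by
    intro x
    calc g x = g (∑ p, b.repr x p • b p) := by rw [b.sum_repr]
      _ = ∑ p, b.repr x p • g (b p) := by rw [map_sum]; simp only [map_smul]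
      _ = 0 := by
          refine Finset.sum_eq_zero fun p _ => ?_
          rw [hb, hg, hgvp, hgup, mul_zero, zero_mul, add_zero, smul_zero]
  have hmain : ∀ x : A, d x = ds x + x * θ - θ * x := by
    intro x
    have h0 := hgzero x
    rw [hgdef] at h0
    have h2 : E x = x * θ - θ * x := sub_eq_zero.mp h0
    have h3 : d x - ds x = x * θ - θ * x := h2
    calc d x = ds x + (d x - ds x) := by abel
      _ = ds x + (x * θ - θ * x) := by rw [h3]
      _ = ds x + x * θ - θ * x := by abel
  refine ⟨θ, ⟨hrepr, hmain⟩, ?_⟩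
  -- uniqueness
  rintro θ' ⟨hr', hm'⟩
  have hr'' : b.repr θ' z0 = 0 := hr'
  set z : A := θ' - θ with hzdef
  have hcz : ∀ x : A, x * z = z * x := by
    intro x
    have h1 := (hmain x).symm.trans (hm' x)
    rw [add_sub_assoc, add_sub_assoc] at h1
    have h2 := add_left_cancel h1
    rw [hzdef, mul_sub, sub_mul]
    have h5 := sub_eq_sub_iff_sub_eq_sub.mp h2
    rw [← neg_sub (x * θ) (x * θ'), ← neg_sub (θ * x) (θ' * x), h5]
  set cz := b.repr z with hczdef
  have hzsum : ∑ p, cz p • b p = z := b.sum_repr z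
  have uniqKey : ∀ (a : A) (s : (Fin m × Fin m) ≃ (Fin m × Fin m))
      (lam rho : Fin m × Fin m → k),
      (∀ p, a * W p = lam p • W (s p)) → (∀ p, W p * a = rho p • W (s p)) →
      ∀ p, cz p * (lam p - rho p) = 0 := by
    intro a s lam rho ha hr p
    have h0 : ∑ q, (cz q * (lam q - rho q)) • b (s q) = 0 := by
      calc ∑ q, (cz q * (lam q - rho q)) • b (s q)
          = ∑ q, cz q • (a * b q - b q * a) := by
            refine Finset.sum_congr rfl fun q _ => ?_
            rw [hbW q, hbW (s q), ha q, hr q, ← sub_smul, smul_smul]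
        _ = a * (∑ q, cz q • b q) - (∑ q, cz q • b q) * a := by
            rw [Finset.mul_sum, Finset.sum_mul, ← Finset.sum_sub_distrib]
            refine Finset.sum_congr rfl fun q _ => ?_
            rw [smul_sub, mul_smul_comm, smul_mul_assoc]
        _ = a * z - z * a := by rw [hzsum]
        _ = 0 := by rw [hcz a]; exact sub_self _
    have h1 : ∑ q, (cz (s.symm q) * (lam (s.symm q) - rho (s.symm q))) • b q = 0 := by
      calc ∑ q, (cz (s.symm q) * (lam (s.symm q) - rho (s.symm q))) • b q
          = ∑ q, (cz (s.symm (s q)) * (lam (s.symm (s q)) - rho (s.symm (s q)))) • b (s q) :=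
            (Equiv.sum_comp s (fun q => (cz (s.symm q) * (lam (s.symm q) - rho (s.symm q))) • b q)).symm
        _ = ∑ q, (cz q * (lam q - rho q)) • b (s q) := by simp only [Equiv.symm_apply_apply]
        _ = 0 := h0
    have hli := Fintype.linearIndependent_iff.mp b.linearIndependent
      (fun q => cz (s.symm q) * (lam (s.symm q) - rho (s.symm q))) h1 (s p)
    simpa using hli
  have hu0 : ∀ p : Fin m × Fin m, (p.2 : ℕ) ≠ 0 → cz p = 0 := by
    intro p hp
    have hkey := uniqKey u σ lamu (fun q => ω ^ (q.2 : ℕ) * lamu q) hA1u hR1u p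
    have hωj : ω ^ (p.2 : ℕ) ≠ 1 := hω.pow_ne_one_of_pos_of_lt hp p.2.isLt
    have hfac : lamu p - ω ^ (p.2 : ℕ) * lamu p ≠ 0 := by
      intro hcon
      apply hωj
      have hfac2 : lamu p * (1 - ω ^ (p.2 : ℕ)) = 0 := by linear_combination hcon
      rcases mul_eq_zero.mp hfac2 with h | h
      · exact absurd h (hlamu0 p)
      · exact (sub_eq_zero.mp h).symm
    rcases mul_eq_zero.mp hkey with h | h
    · exact h
    · exact absurd h hfac
  have hv0 : ∀ p : Fin m × Fin m, (p.1 : ℕ) ≠ 0 → cz p = 0 := by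
    intro p hp
    have hkey := uniqKey v τ (fun q => ω ^ (q.1 : ℕ) * nuv q) nuv hA1v hR1v p
    have hωi : ω ^ (p.1 : ℕ) ≠ 1 := hω.pow_ne_one_of_pos_of_lt hp p.1.isLt
    have hfac : ω ^ (p.1 : ℕ) * nuv p - nuv p ≠ 0 := by
      intro hcon
      apply hωi
      have hfac2 : nuv p * (ω ^ (p.1 : ℕ) - 1) = 0 := by linear_combination hcon
      rcases mul_eq_zero.mp hfac2 with h | h
      · exact absurd h (hnuv0 p)
      · exact sub_eq_zero.mp h
    rcases mul_eq_zero.mp hkey with h | h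
    · exact h
    · exact absurd h hfac
  have hz00 : cz z0 = 0 := by
    rw [hczdef, hzdef, map_sub]
    simp [hr'', hrepr]
  have hcz0 : ∀ p, cz p = 0 := by
    intro p
    by_cases h1 : (p.1 : ℕ) = 0
    · by_cases h2 : (p.2 : ℕ) = 0
      · have hpz : p = z0 := by
          rw [hz0, Prod.ext_iff]
          exact ⟨Fin.ext h1, Fin.ext h2⟩
        rw [hpz]; exact hz00
      · exact hu0 p h2
    · exact hv0 p h1
  have hzzero : z = 0 := by
    rw [← hzsum]
    exact Finset.sum_eq_zero fun p _ => by rw [hcz0 p, zero_smul]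
  have : θ' - θ = 0 := hzzero
  exact sub_eq_zero.mp this
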